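/- Define five vectors in ℂ^2: φ_1 = (1, 0), φ_2 = (1/√2)(1, −1), φ_3 = (1/√2)(1, 1), φ_4 = (1/√2)(1, i), φ_5 = (1/√2)(1, −i). Then each φ_j is a unit vector, the angle set A_Φ = { |⟨φ_j, φ_l⟩| : j ≠ l } equals {1/√2, 0} (so Φ is biangular with coherence 1/√2), and Φ is not a tight frame, i.e., ∑_{j=1}^5 φ_j φ_j* ≠ (5/2)·I_2. -/

import Mathlib

/-!
The squared moduli of the Gram entries `⟨φ_j, φ_l⟩` form the table `squaredGram`: `1` on the
diagonal, `0` for the orthogonal pairs `{φ₂, φ₃}` and `{φ₄, φ₅}`, and `1/2` otherwise. This gives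
both the unit norms and the angle set. Applying the frame operator of a tight frame with bound `c`
to a standard basis vector `e_i` shows `∑ j, |φ_j(i)|² = c`; in the first coordinate this sum is
`1 + 4 · 1/2 = 3 ≠ 5/2`.
-/

open Complex

/-- The five vectors `(1,0)`, `(1/√2)(1,-1)`, `(1/√2)(1,1)`, `(1/√2)(1,i)`,
`(1/√2)(1,-i)` in `ℂ²`. -/
noncomputable def Φbi : Fin 5 → EuclideanSpace ℂ (Fin 2) :=
  ![(WithLp.equiv 2 (Fin 2 → ℂ)).symm ![1, 0],
    (WithLp.equiv 2 (Fin 2 → ℂ)).symm ![(Real.sqrt 2 : ℂ)⁻¹, -(Real.sqrt 2 : ℂ)⁻¹],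
    (WithLp.equiv 2 (Fin 2 → ℂ)).symm ![(Real.sqrt 2 : ℂ)⁻¹, (Real.sqrt 2 : ℂ)⁻¹],
    (WithLp.equiv 2 (Fin 2 → ℂ)).symm ![(Real.sqrt 2 : ℂ)⁻¹, (Real.sqrt 2 : ℂ)⁻¹ * Complex.I],
    (WithLp.equiv 2 (Fin 2 → ℂ)).symm ![(Real.sqrt 2 : ℂ)⁻¹, -((Real.sqrt 2 : ℂ)⁻¹ * Complex.I)]]

open ComplexConjugate

lemma EuclideanSpace.inner_fin_two (x y : EuclideanSpace ℂ (Fin 2)) :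
    inner ℂ x y = conj (x 0) * y 0 + conj (x 1) * y 1 := by
  simp [PiLp.inner_apply, Fin.sum_univ_two, mul_comm]

lemma sum_norm_sq_apply_of_tight {ι n : Type*} [Fintype ι] [Fintype n] [DecidableEq n]
    (φ : ι → EuclideanSpace ℂ n) (c : ℂ) (h : ∀ x, ∑ j, inner ℂ (φ j) x • φ j = c • x) (i : n) :
    ((∑ j, ‖φ j i‖ ^ 2 : ℝ) : ℂ) = c := by
  have hi := congrArg (· i) (h (EuclideanSpace.single i 1))
  simpa [EuclideanSpace.inner_single_right, RCLike.conj_mul] using hi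

lemma half_sqrt_two_mul_self : √2 / 2 * (√2 / 2) = (2⁻¹ : ℝ) := by
  rw [div_mul_div_comm, Real.mul_self_sqrt zero_le_two]; norm_num

noncomputable def squaredGram : Matrix (Fin 5) (Fin 5) ℝ :=
  !![1, 2⁻¹, 2⁻¹, 2⁻¹, 2⁻¹;
     2⁻¹, 1, 0, 2⁻¹, 2⁻¹;
     2⁻¹, 0, 1, 2⁻¹, 2⁻¹;
     2⁻¹, 2⁻¹, 2⁻¹, 1, 0;
     2⁻¹, 2⁻¹, 2⁻¹, 0, 1]

lemma squaredGram_of_ne {j l : Fin 5} (h : j ≠ l) :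
    squaredGram j l = 2⁻¹ ∨ squaredGram j l = 0 := by
  fin_cases j <;> fin_cases l <;> simp_all [squaredGram]

lemma normSq_inner_Φbi (j l : Fin 5) :
    normSq (inner ℂ (Φbi j) (Φbi l)) = squaredGram j l := by
  rw [EuclideanSpace.inner_fin_two]
  fin_cases j <;> fin_cases l <;>
    norm_num [Φbi, normSq_apply, squaredGram, half_sqrt_two_mul_self]

lemma norm_inner_Φbi (j l : Fin 5) : ‖inner ℂ (Φbi j) (Φbi l)‖ = √(squaredGram j l) := by
  rw [norm_def, normSq_inner_Φbi]

lemma norm_Φbi (j : Fin 5) : ‖Φbi j‖ = 1 := by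
  have hdiag : squaredGram j j = 1 := by fin_cases j <;> rfl
  have hsq : ‖Φbi j‖ ^ 2 = 1 := by
    rw [← inner_self_eq_norm_sq (𝕜 := ℂ), inner_self_re_eq_norm, norm_inner_Φbi, hdiag,
      Real.sqrt_one]
  exact (pow_eq_one_iff_of_nonneg (norm_nonneg _) two_ne_zero).mp hsq

lemma sum_norm_sq_Φbi_zero : ∑ j, ‖Φbi j 0‖ ^ 2 = 3 := by
  simp only [Φbi, WithLp.equiv_symm_apply, Fin.sum_univ_five, Matrix.cons_val, norm_one, one_pow,
    norm_inv, norm_real, Real.norm_eq_abs, inv_pow, sq_abs, Nat.ofNat_nonneg, Real.sq_sqrt]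
  norm_num

/-- The five vectors of `Φbi` are unit vectors in `ℂ²` with angle set
exactly `{1/√2, 0}` (so `Φbi` is biangular with coherence `1/√2`), and `Φbi` is not a
tight frame: `∑ j, φ_j φ_j* ≠ (5/2) • I`. -/
theorem biangular_nontight_grassmannian_five_two :
    (∀ j, ‖Φbi j‖ = 1) ∧
    {r : ℝ | ∃ j l, j ≠ l ∧ ‖(inner ℂ (Φbi j) (Φbi l) : ℂ)‖ = r} = {1 / Real.sqrt 2, 0} ∧
    ¬ (∀ x : EuclideanSpace ℂ (Fin 2),
      ∑ j, (inner ℂ (Φbi j) x : ℂ) • Φbi j = (5 / 2 : ℂ) • x) := by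
  refine ⟨norm_Φbi, ?_, fun h => ?_⟩
  · ext r
    simp only [Set.mem_insert_iff, Set.mem_singleton_iff]
    constructor
    · rintro ⟨j, l, hjl, rfl⟩
      rcases squaredGram_of_ne hjl with h | h <;> simp [norm_inner_Φbi, h]
    · rintro (rfl | rfl)
      · exact ⟨0, 1, by decide, by simp [norm_inner_Φbi, squaredGram]⟩
      · exact ⟨1, 2, by decide, by simp [norm_inner_Φbi, squaredGram]⟩
  · have := sum_norm_sq_apply_of_tight Φbi _ h 0
    rw [sum_norm_sq_Φbi_zero] at this
    norm_num at this
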